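/- arXiv:1204.0898 — 3 statements merged into one kernel-verified Lean document; each statement's English description precedes it below -/
import Mathlib

section
/- Let A ⊆ ℝ be an open invex set with respect to η : A × A → ℝ and suppose f : A → ℝ is a differentiable function with |f′| prequasiinvex with respect to η on A. Then for every a, b ∈ A with a < a + η(b,a): | (f(a) + f(a+η(b,a)))/2 − (1/η(b,a)) · ∫_a^{a+η(b,a)} f(x) dx | ≤ (|η(b,a)|/4) · max{|f′(a)|, |f′(b)|}. -/
/-!
Writing `c` for the midpoint of `[a, b]`, integration by parts gives
`(b - a) (f a + f b) / 2 - ∫ₐᵇ f = ∫ₐᵇ (x - c) f'(x) dx`, whose absolute value is at most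
`sup |f'| · ∫ₐᵇ |x - c| dx = sup |f'| · (b - a)² / 4`. In the theorem the interval is
`[a, a + η(b, a)] = {a + t η(b, a) : t ∈ [0, 1]}`, which invexity keeps inside `A` and on which
prequasiinvexity bounds `|f'|` by `max |f' a| |f' b|`.
-/

open MeasureTheory Set intervalIntegral
open scoped Interval

theorem intervalIntegrable_of_hasDerivAt_of_abs_le {f f' : ℝ → ℝ} {a b M : ℝ}
    (hder : ∀ x ∈ uIcc a b, HasDerivAt f (f' x) x) (hbound : ∀ x ∈ uIcc a b, |f' x| ≤ M) :
    IntervalIntegrable f' volume a b := by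
  have hmeas : AEStronglyMeasurable f' (volume.restrict (uIcc a b)) :=
    (measurable_deriv f).aestronglyMeasurable.congr <|
      (ae_restrict_mem measurableSet_uIcc).mono fun x hx => (hder x hx).deriv
  refine (IntegrableOn.of_bound isCompact_uIcc.measure_lt_top hmeas M ?_).intervalIntegrable
  exact (ae_restrict_mem measurableSet_uIcc).mono fun x hx => hbound x hx

theorem integral_abs_sub_midpoint {a b : ℝ} (hab : a ≤ b) :
    ∫ x in a..b, |x - (a + b) / 2| = (b - a) ^ 2 / 4 := by
  obtain ⟨c, hc⟩ : ∃ c, (a + b) / 2 = c := ⟨_, rfl⟩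
  have hac : a ≤ c := by linarith
  have hcb : c ≤ b := by linarith
  have hcont : Continuous fun x => |x - c| := by fun_prop
  have half (u : ℝ) : ∫ x in Ι c u, |x - c| = (u - c) ^ 2 / 2 := by
    simpa [sq_abs, one_add_one_eq_two] using integral_pow_abs_sub_uIoc (a := c) (b := u) (n := 1)
  rw [hc, ← integral_add_adjacent_intervals (hcont.intervalIntegrable a c)
    (hcont.intervalIntegrable c b), integral_of_le hac, integral_of_le hcb, ← uIoc_of_le hac,
    ← uIoc_of_le hcb, uIoc_comm, half, half, ← hc]
  ring

theorem integral_sub_midpoint_mul_deriv {f f' : ℝ → ℝ} {a b : ℝ}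
    (hder : ∀ x ∈ uIcc a b, HasDerivAt f (f' x) x) (hint : IntervalIntegrable f' volume a b) :
    ∫ x in a..b, (x - (a + b) / 2) * f' x = (b - a) * ((f a + f b) / 2) - ∫ x in a..b, f x := by
  rw [integral_mul_deriv_eq_deriv_mul (u := fun x => x - (a + b) / 2)
    (fun x _ => (hasDerivAt_id x).sub_const _) hder intervalIntegrable_const hint]
  simp only [one_mul]
  ring

theorem abs_trapezoid_sub_average_le {f f' : ℝ → ℝ} {a b M : ℝ} (hab : a < b)
    (hder : ∀ x ∈ Icc a b, HasDerivAt f (f' x) x) (hbound : ∀ x ∈ Icc a b, |f' x| ≤ M) :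
    |(f a + f b) / 2 - (1 / (b - a)) * ∫ x in a..b, f x| ≤ (b - a) / 4 * M := by
  have hba : 0 < b - a := sub_pos.2 hab
  have hkernel : |∫ x in a..b, (x - (a + b) / 2) * f' x| ≤ (b - a) ^ 2 / 4 * M := by
    rw [← Real.norm_eq_abs, ← integral_abs_sub_midpoint hab.le,
      ← intervalIntegral.integral_mul_const M]
    refine intervalIntegral.norm_integral_le_of_norm_le hab.le (ae_of_all volume fun x hx => ?_)
      ((by fun_prop : Continuous fun x => |x - (a + b) / 2| * M).intervalIntegrable a b)
    rw [norm_mul, Real.norm_eq_abs]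
    exact mul_le_mul_of_nonneg_left (hbound x (Ioc_subset_Icc_self hx)) (abs_nonneg _)
  have hid : (f a + f b) / 2 - (1 / (b - a)) * ∫ x in a..b, f x
      = (1 / (b - a)) * ∫ x in a..b, (x - (a + b) / 2) * f' x := by
    rw [← uIcc_of_le hab.le] at hder hbound
    rw [integral_sub_midpoint_mul_deriv hder
      (intervalIntegrable_of_hasDerivAt_of_abs_le hder hbound)]
    field_simp
  calc |(f a + f b) / 2 - (1 / (b - a)) * ∫ x in a..b, f x|
      ≤ (1 / (b - a)) * ((b - a) ^ 2 / 4 * M) := by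
        rw [hid, abs_mul, abs_of_pos (one_div_pos.2 hba)]
        gcongr
    _ = (b - a) / 4 * M := by field_simp

theorem prequasiinvex_deriv_HH_general
    (A : Set ℝ) (η : ℝ → ℝ → ℝ) (f f' : ℝ → ℝ)
    (hinv : ∀ x ∈ A, ∀ y ∈ A, ∀ t ∈ Icc (0:ℝ) 1, x + t * η y x ∈ A)
    (hder : ∀ x ∈ A, HasDerivAt f (f' x) x)
    (hpq : ∀ x ∈ A, ∀ y ∈ A, ∀ t ∈ Icc (0:ℝ) 1,
      |f' (x + t * η y x)| ≤ max |f' x| |f' y|) :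
    ∀ a ∈ A, ∀ b ∈ A, a < a + η b a →
      |(f a + f (a + η b a)) / 2 - (1 / η b a) * ∫ x in a..(a + η b a), f x|
        ≤ |η b a| / 4 * max |f' a| |f' b| := by
  intro a ha b hb hab
  have hseg : ∀ x ∈ Icc a (a + η b a), ∃ t ∈ Icc (0:ℝ) 1, a + t * η b a = x := by
    intro x hx
    rw [← segment_eq_Icc hab.le, segment_eq_image'] at hx
    simpa using hx
  have hmem : ∀ x ∈ Icc a (a + η b a), x ∈ A := by
    intro x hx
    obtain ⟨t, ht, rfl⟩ := hseg x hx
    exact hinv a ha b hb t ht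
  have hbound : ∀ x ∈ Icc a (a + η b a), |f' x| ≤ max |f' a| |f' b| := by
    intro x hx
    obtain ⟨t, ht, rfl⟩ := hseg x hx
    exact hpq a ha b hb t ht
  rw [abs_of_pos (lt_add_iff_pos_right a |>.1 hab)]
  simpa only [add_sub_cancel_left] using
    abs_trapezoid_sub_average_le hab (fun x hx => hder x (hmem x hx)) hbound

/-- Hermite–Hadamard type inequality (Barani et al.) for
differentiable functions with prequasiinvex `|f'|`. -/
theorem prequasiinvex_deriv_HH
    (A : Set ℝ) (η : ℝ → ℝ → ℝ) (f f' : ℝ → ℝ)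
    (hA : IsOpen A)
    (hinv : ∀ x ∈ A, ∀ y ∈ A, ∀ t ∈ Icc (0:ℝ) 1, x + t * η y x ∈ A)
    (hder : ∀ x ∈ A, HasDerivAt f (f' x) x)
    (hpq : ∀ x ∈ A, ∀ y ∈ A, ∀ t ∈ Icc (0:ℝ) 1,
      |f' (x + t * η y x)| ≤ max |f' x| |f' y|) :
    ∀ a ∈ A, ∀ b ∈ A, a < a + η b a →
      |(f a + f (a + η b a)) / 2 - (1 / η b a) * ∫ x in a..(a + η b a), f x|
        ≤ |η b a| / 4 * max |f' a| |f' b| :=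
  prequasiinvex_deriv_HH_general A η f f' hinv hder hpq
end

section
/- Let A ⊆ ℝ be an invex set with respect to η : A × A → ℝ satisfying Condition C. Then for every x, y ∈ A and every t₁, t₂ ∈ [0,1]: η(y + t₂η(x,y), y + t₁η(x,y)) = (t₂ − t₁) η(x,y). -/
open Set

/-!
Put `d = η(x,y)` and `w = y + t₂ d ∈ A`. Condition C gives `η(x,w) = (1 - t₂) d` and
`η(y,w) = (-t₂) d`, so the point `y + t₁ d = w + (t₁ - t₂) d` lies on the `η`-segment from `w`
towards `x` when `t₂ ≤ t₁`, and towards `y` when `t₁ ≤ t₂`. The first identity of Condition C,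
applied at `w`, then evaluates `η` from `w` to any point of such a segment.
-/

theorem eta_self_add_mul {A : Set ℝ} {η : ℝ → ℝ → ℝ}
    (hC : ∀ x ∈ A, ∀ y ∈ A, ∀ t ∈ Icc (0:ℝ) 1, η y (y + t * η x y) = -t * η x y)
    {z w : ℝ} (hz : z ∈ A) (hw : w ∈ A) {a b d : ℝ} (ha : 0 ≤ a) (hab : a ≤ b)
    (hzw : η z w = b * d) : η w (w + a * d) = -(a * d) := by
  have hs : a / b ∈ Icc (0:ℝ) 1 :=
    ⟨div_nonneg ha (ha.trans hab), div_le_one_of_le₀ hab (ha.trans hab)⟩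
  -- `b = 0` forces `a = 0`, so the junk value `a / 0 = 0` is harmless.
  have hsb : a / b * b = a := div_mul_cancel_of_imp fun hb => le_antisymm (hb ▸ hab) ha
  have key := hC z hz w hw (a / b) hs
  rwa [hzw, neg_mul, ← mul_assoc, hsb] at key

/-- Consequence of Condition C: for all `x, y` in an invex set
and `t₁, t₂ ∈ [0,1]`, `η(y + t₂η(x,y), y + t₁η(x,y)) = (t₂ − t₁)η(x,y)`. -/
theorem conditionC_eta_eq
    (A : Set ℝ) (η : ℝ → ℝ → ℝ)
    (hinv : ∀ x ∈ A, ∀ y ∈ A, ∀ t ∈ Icc (0:ℝ) 1, x + t * η y x ∈ A)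
    (hC : ∀ x ∈ A, ∀ y ∈ A, ∀ t ∈ Icc (0:ℝ) 1,
      η y (y + t * η x y) = -t * η x y ∧ η x (y + t * η x y) = (1 - t) * η x y) :
    ∀ x ∈ A, ∀ y ∈ A, ∀ t₁ ∈ Icc (0:ℝ) 1, ∀ t₂ ∈ Icc (0:ℝ) 1,
      η (y + t₂ * η x y) (y + t₁ * η x y) = (t₂ - t₁) * η x y := by
  intro x hx y hy t₁ ht₁ t₂ ht₂
  have hC₁ := fun x hx y hy t ht => (hC x hx y hy t ht).1
  have hw : y + t₂ * η x y ∈ A := hinv y hy x hx t₂ ht₂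
  have hpoint : y + t₁ * η x y = y + t₂ * η x y + (t₁ - t₂) * η x y := by ring
  rw [hpoint]
  rcases le_total t₂ t₁ with hle | hle
  · have hxw : η x (y + t₂ * η x y) = (1 - t₂) * η x y := (hC x hx y hy t₂ ht₂).2
    rw [eta_self_add_mul hC₁ hx hw (sub_nonneg.2 hle) (by linarith [ht₁.2]) hxw]
    ring
  · have hyw : η y (y + t₂ * η x y) = t₂ * -η x y := by
      rw [(hC x hx y hy t₂ ht₂).1, neg_mul, mul_neg]
    have hseg := eta_self_add_mul hC₁ hy hw (sub_nonneg.2 hle) (by linarith [ht₁.1]) hyw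
    rw [show (t₁ - t₂) * η x y = (t₂ - t₁) * -η x y by ring, hseg]
    ring
end

section
/- Let A ⊆ ℝ be an invex set with respect to η : A × A → ℝ satisfying Condition C and let f : A → ℝ be prequasiinvex with respect to η. Then for every a, b ∈ A with a + η(b,a) ∈ A and every t ∈ [0,1]: f(a + tη(b,a)) ≤ max{f(a), f(a + η(b,a))} and f(a + (1−t)η(b,a)) ≤ max{f(a), f(a + η(b,a))}, and hence f(a + tη(b,a)) + f(a + (1−t)η(b,a)) ≤ 2 max{f(a), f(a + η(b,a))}. -/
open Set

/-- For a prequasiinvex function on an invex set with η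
satisfying Condition C, key pointwise bounds along the path `a + tη(b,a)`. -/
theorem prequasiinvex_path_bounds
    (A : Set ℝ) (η : ℝ → ℝ → ℝ) (f : ℝ → ℝ)
    (hinv : ∀ x ∈ A, ∀ y ∈ A, ∀ t ∈ Icc (0:ℝ) 1, x + t * η y x ∈ A)
    (hC : ∀ x ∈ A, ∀ y ∈ A, ∀ t ∈ Icc (0:ℝ) 1,
      η y (y + t * η x y) = -t * η x y ∧ η x (y + t * η x y) = (1 - t) * η x y)
    (hpq : ∀ x ∈ A, ∀ y ∈ A, ∀ t ∈ Icc (0:ℝ) 1,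
      f (x + t * η y x) ≤ max (f x) (f y)) :
    ∀ a ∈ A, ∀ b ∈ A, a + η b a ∈ A → ∀ t ∈ Icc (0:ℝ) 1,
      (f (a + t * η b a) ≤ max (f a) (f (a + η b a)) ∧
       f (a + (1 - t) * η b a) ≤ max (f a) (f (a + η b a))) ∧
      f (a + t * η b a) + f (a + (1 - t) * η b a)
        ≤ 2 * max (f a) (f (a + η b a)) := by
  intro a ha b hb hc t ht
  obtain ⟨ht0, ht1⟩ := ht
  have h1 : (1:ℝ) - t ∈ Icc (0:ℝ) 1 := ⟨by linarith, by linarith⟩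
  have hη : η a (a + η b a) = -η b a := by
    have h := (hC b hb a ha 1 ⟨zero_le_one, le_refl 1⟩).1
    simpa using h
  have key : ∀ s ∈ Icc (0:ℝ) 1,
      f (a + (1 - s) * η b a) ≤ max (f a) (f (a + η b a)) := by
    intro s hs
    have h := hpq _ hc a ha s hs
    rw [hη] at h
    have e : a + η b a + s * -η b a = a + (1 - s) * η b a := by ring
    rw [e] at h
    exact h.trans (le_of_eq (max_comm _ _))
  have k1 : f (a + t * η b a) ≤ max (f a) (f (a + η b a)) := by
    have h := key (1 - t) h1
    have e : (1 : ℝ) - (1 - t) = t := by ring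
    rwa [e] at h
  have k2 := key t ⟨ht0, ht1⟩
  exact ⟨⟨k1, k2⟩, by linarith⟩
end
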